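/- Let h : ℝ → ℝ be smooth. Define the WENO numerical fluxes \hat f_{i±1/2} = Σ_{k=0}^{2} ω_k^± \hat f^k_{i±1/2} where \hat f^k are the second-order candidate fluxes at x_{i±1/2}. If the nonlinear weights satisfy ω_k^± - d_k = O(Δx^3) with d_0 = 1/6, d_1 = 2/3, d_2 = 1/6, then (\hat f_{i+1/2} - \hat f_{i-1/2})/Δx = (h(x_{i+1/2}) - h(x_{i-1/2}))/Δx + O(Δx^4) as Δx → 0. -/

import Mathlib

open Asymptotics Filter intervalIntegral

/-- Cell average of `h` over the cell of width `Δx` centered at `x`. -/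
noncomputable def cellAvg (h : ℝ → ℝ) (Δx x : ℝ) : ℝ :=
  (1 / Δx) * ∫ ξ in (x - Δx / 2)..(x + Δx / 2), h ξ

/-- Linear weights of the fourth-order central-upwind WENO scheme. -/
noncomputable def dWeight : Fin 3 → ℝ := ![1/6, 2/3, 1/6]

/-- Second-order candidate fluxes at `x_{i+1/2}` (shift `j = 0`) or
`x_{i-1/2}` (shift `j = -1`), built from the cell averages `f` over the stencil. -/
noncomputable def candFlux (f : ℤ → ℝ) (j : ℤ) : Fin 3 → ℝ :=
  ![-(1/2) * f (j - 1) + (3/2) * f j,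
    (1/2) * f j + (1/2) * f (j + 1),
    (3/2) * f (j + 1) - (1/2) * f (j + 2)]

/-- Cell averages of `h` on the uniform grid centered at `xi`. -/
noncomputable def gridAvg (h : ℝ → ℝ) (xi Δx : ℝ) : ℤ → ℝ :=
  fun j => cellAvg h Δx (xi + (j : ℝ) * Δx)

open Set Topology

section Helpers

lemma myStep {F : ℝ → ℝ} (hF : ContDiff ℝ (⊤:ℕ∞) F) (h0 : F 0 = 0) {n : ℕ}
    (hd : deriv F =O[𝓝[≥] (0:ℝ)] fun s => s ^ n) :
    F =O[𝓝[≥] (0:ℝ)] fun s => s ^ (n+1) := by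
  obtain ⟨C, hC⟩ := hd.bound
  rw [eventually_nhdsWithin_iff] at hC
  obtain ⟨δ, δpos, hδ⟩ := Metric.eventually_nhds_iff.mp hC
  refine IsBigO.of_bound |C| ?_
  rw [eventually_nhdsWithin_iff]
  filter_upwards [Metric.eventually_nhds_iff.mpr ⟨δ, δpos, fun {y} hy => hy⟩] with x hx hx0
  have hx0' : (0:ℝ) ≤ x := hx0
  have key := norm_image_sub_le_of_norm_deriv_le_segment'
    (f := F) (f' := deriv F) (a := 0) (b := x)
    (fun t ht => ((hF.differentiable (by simp) t).hasDerivAt).hasDerivWithinAt)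
    (C := |C| * x ^ n) ?_ x (right_mem_Icc.mpr hx0')
  · rw [h0, sub_zero] at key
    calc ‖F x‖ ≤ |C| * x ^ n * (x - 0) := key
    _ = |C| * ‖x ^ (n+1)‖ := by
        rw [sub_zero, Real.norm_eq_abs, abs_of_nonneg (pow_nonneg hx0' _)]; ring
  · intro t ht
    have h1 : ‖deriv F t‖ ≤ C * ‖t ^ n‖ := by
      refine hδ ?_ ht.1
      rw [Real.dist_eq, sub_zero] at hx ⊢
      rw [abs_of_nonneg ht.1]
      exact lt_of_le_of_lt (le_trans (le_of_lt ht.2) (le_abs_self x)) hx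
    calc ‖deriv F t‖ ≤ C * ‖t ^ n‖ := h1
      _ ≤ |C| * x ^ n := by
          rw [Real.norm_eq_abs, abs_pow, abs_of_nonneg ht.1]
          exact mul_le_mul (le_abs_self C)
            (pow_le_pow_left₀ ht.1
              (le_trans (le_of_lt ht.2) (le_abs_self x) |>.trans
                (le_of_eq (abs_of_nonneg hx0'))) n)
            (pow_nonneg ht.1 n) (abs_nonneg C)

lemma myVanish : ∀ (n : ℕ) (F : ℝ → ℝ), ContDiff ℝ (⊤:ℕ∞) F →
    (∀ j ≤ n, iteratedDeriv j F 0 = 0) → F =O[𝓝[≥] (0:ℝ)] fun s => s ^ (n+1) := by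
  intro n
  induction n with
  | zero =>
    intro F hF hv
    refine myStep hF (hv 0 le_rfl) ?_
    have : Tendsto (deriv F) (𝓝[≥] (0:ℝ)) (𝓝 (deriv F 0)) :=
      ((contDiff_infty_iff_deriv.mp hF).2.continuous.continuousAt).mono_left nhdsWithin_le_nhds
    simpa using this.isBigO_one ℝ
  | succ n ih =>
    intro F hF hv
    refine myStep hF (hv 0 (Nat.zero_le _)) ?_
    refine ih (deriv F) (contDiff_infty_iff_deriv.mp hF).2 ?_
    intro j hj
    rw [← iteratedDeriv_succ']
    exact hv (j+1) (by omega)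

lemma myIterAdd {f g : ℝ → ℝ} (hf : ContDiff ℝ (⊤:ℕ∞) f) (hg : ContDiff ℝ (⊤:ℕ∞) g)
    (n : ℕ) (x : ℝ) :
    iteratedDeriv n (fun s => f s + g s) x = iteratedDeriv n f x + iteratedDeriv n g x := by
  simp only [← iteratedDerivWithin_univ]
  exact iteratedDerivWithin_add (Set.mem_univ x) uniqueDiffOn_univ
    ((hf.of_le (WithTop.coe_le_coe.mpr le_top)).contDiffWithinAt)
    ((hg.of_le (WithTop.coe_le_coe.mpr le_top)).contDiffWithinAt)

lemma myIterSub {f g : ℝ → ℝ} (hf : ContDiff ℝ (⊤:ℕ∞) f) (hg : ContDiff ℝ (⊤:ℕ∞) g)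
    (n : ℕ) (x : ℝ) :
    iteratedDeriv n (fun s => f s - g s) x = iteratedDeriv n f x - iteratedDeriv n g x := by
  simp only [← iteratedDerivWithin_univ]
  exact iteratedDerivWithin_sub (Set.mem_univ x) uniqueDiffOn_univ
    ((hf.of_le (WithTop.coe_le_coe.mpr le_top)).contDiffWithinAt)
    ((hg.of_le (WithTop.coe_le_coe.mpr le_top)).contDiffWithinAt)

lemma myIterCMul {f : ℝ → ℝ} (hf : ContDiff ℝ (⊤:ℕ∞) f) (c : ℝ) (n : ℕ) (x : ℝ) :
    iteratedDeriv n (fun s => c * f s) x = c * iteratedDeriv n f x := by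
  simp only [← iteratedDerivWithin_univ]
  exact iteratedDerivWithin_const_mul (Set.mem_univ x) uniqueDiffOn_univ c
    ((hf.of_le (WithTop.coe_le_coe.mpr le_top)).contDiffWithinAt)

lemma myIterAffine {F : ℝ → ℝ} (hF : ContDiff ℝ (⊤:ℕ∞) F) (a t : ℝ) (n : ℕ) (x : ℝ) :
    iteratedDeriv n (fun s => F (a + t * s)) x = t ^ n * iteratedDeriv n F (a + t * x) := by
  have h1 : ContDiff ℝ (n : ℕ∞) (fun z => F (a + z)) :=
    (hF.of_le (by exact_mod_cast le_top)).comp (contDiff_const.add contDiff_id)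
  have h2 := iteratedDeriv_comp_const_mul (f := fun z => F (a + z)) h1 t
  have h3 := congrFun h2 x
  rw [show (fun s => F (a + t * s)) = (fun s => (fun z => F (a + z)) (t * s)) from rfl, h3,
    iteratedDeriv_comp_const_add]

lemma myIterMulId {g : ℝ → ℝ} (hg : ContDiff ℝ (⊤:ℕ∞) g) :
    ∀ (n : ℕ) (x : ℝ), iteratedDeriv n (fun s => s * g s) x
      = x * iteratedDeriv n g x + n * iteratedDeriv (n-1) g x := by
  intro n
  induction n with
  | zero => intro x; simp
  | succ n ih =>
    intro x
    have hd : ∀ m : ℕ, Differentiable ℝ (iteratedDeriv m g) :=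
      fun m => hg.differentiable_iteratedDeriv m
        (by exact_mod_cast lt_top_iff_ne_top.mpr (by simp))
    rw [iteratedDeriv_succ, funext ih]
    rw [deriv_fun_add (f := fun y => y * iteratedDeriv n g y) (g := fun y => (n:ℝ) * iteratedDeriv (n-1) g y) (differentiableAt_fun_id.mul ((hd n) x)) (((differentiable_const _).mul (hd (n-1))) x)]
    rw [deriv_fun_mul differentiableAt_fun_id ((hd n) x),
      deriv_const_mul _ ((hd (n-1)) x)]
    simp only [deriv_id'', one_mul, ← iteratedDeriv_succ]
    cases n with
    | zero => simp [iteratedDeriv_succ]; ring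
    | succ m =>
      have : m + 1 - 1 + 1 = m + 1 := rfl
      rw [this]
      push_cast
      ring

lemma contAff {F : ℝ → ℝ} (hF : ContDiff ℝ (⊤:ℕ∞) F) (c a t : ℝ) :
    ContDiff ℝ (⊤:ℕ∞) (fun s => c * F (a + t * s)) := by fun_prop

lemma contAff' {F : ℝ → ℝ} (hF : ContDiff ℝ (⊤:ℕ∞) F) (a t : ℝ) :
    ContDiff ℝ (⊤:ℕ∞) (fun s => F (a + t * s)) := by fun_prop

lemma iterCombo4 {F : ℝ → ℝ} (hF : ContDiff ℝ (⊤:ℕ∞) F)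
    (a c1 t1 c2 t2 c3 t3 c4 t4 : ℝ) (n : ℕ) :
    iteratedDeriv n (fun s => c1 * F (a + t1*s) + c2 * F (a + t2*s)
        + c3 * F (a + t3*s) + c4 * F (a + t4*s)) 0
      = (c1*t1^n + c2*t2^n + c3*t3^n + c4*t4^n) * iteratedDeriv n F a := by
  have A := contAff hF
  rw [myIterAdd (((A c1 a t1).add (A c2 a t2)).add (A c3 a t3)) (A c4 a t4),
    myIterAdd ((A c1 a t1).add (A c2 a t2)) (A c3 a t3),
    myIterAdd (A c1 a t1) (A c2 a t2)]
  rw [myIterCMul (contAff' hF a _) c1,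
    myIterCMul (contAff' hF a _) c2,
    myIterCMul (contAff' hF a _) c3,
    myIterCMul (contAff' hF a _) c4]
  rw [myIterAffine hF, myIterAffine hF, myIterAffine hF, myIterAffine hF]
  simp only [mul_zero, add_zero]
  ring

lemma iterCombo6 {F : ℝ → ℝ} (hF : ContDiff ℝ (⊤:ℕ∞) F)
    (a c1 t1 c2 t2 c3 t3 c4 t4 c5 t5 c6 t6 : ℝ) (n : ℕ) :
    iteratedDeriv n (fun s => c1 * F (a + t1*s) + c2 * F (a + t2*s)
        + c3 * F (a + t3*s) + c4 * F (a + t4*s) + c5 * F (a + t5*s) + c6 * F (a + t6*s)) 0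
      = (c1*t1^n + c2*t2^n + c3*t3^n + c4*t4^n + c5*t5^n + c6*t6^n) * iteratedDeriv n F a := by
  have A := contAff hF
  have hcomp : ContDiff ℝ (⊤:ℕ∞) (fun s => c1 * F (a + t1*s) + c2 * F (a + t2*s)
      + c3 * F (a + t3*s) + c4 * F (a + t4*s)) :=
    (((A c1 a t1).add (A c2 a t2)).add (A c3 a t3)).add (A c4 a t4)
  rw [myIterAdd (hcomp.add (A c5 a t5)) (A c6 a t6), myIterAdd hcomp (A c5 a t5),
    iterCombo4 hF]
  rw [myIterCMul (contAff' hF a _) c5,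
    myIterCMul (contAff' hF a _) c6,
    myIterAffine hF, myIterAffine hF]
  simp only [mul_zero, add_zero]
  ring

/-- Antiderivative of `h` based at `xi`. -/
noncomputable def Hfun (h : ℝ → ℝ) (xi : ℝ) : ℝ → ℝ := fun y => ∫ t in xi..y, h t

variable {h : ℝ → ℝ} (hh : ContDiff ℝ (⊤:ℕ∞) h) (xi : ℝ)
include hh

lemma Hfun_hasDerivAt (y : ℝ) : HasDerivAt (Hfun h xi) (h y) y :=
  (hh.continuous.integral_hasStrictDerivAt xi y).hasDerivAt

lemma Hfun_deriv : deriv (Hfun h xi) = h := funext fun y => (Hfun_hasDerivAt hh xi y).deriv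

lemma Hfun_contDiff : ContDiff ℝ (⊤:ℕ∞) (Hfun h xi) := by
  refine contDiff_infty_iff_deriv.mpr ⟨fun y => (Hfun_hasDerivAt hh xi y).differentiableAt, ?_⟩
  rw [Hfun_deriv hh xi]; exact_mod_cast hh

lemma Hfun_iter (n : ℕ) : iteratedDeriv (n+1) (Hfun h xi) xi = iteratedDeriv n h xi := by
  rw [iteratedDeriv_succ', Hfun_deriv hh xi]

lemma gridAvg_eq {s : ℝ} (hs : s ≠ 0) (j : ℤ) :
    gridAvg h xi s j
      = (Hfun h xi (xi + ((j:ℝ) + 1/2) * s) - Hfun h xi (xi + ((j:ℝ) - 1/2) * s)) / s := by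
  have hint : ∀ a b : ℝ, IntervalIntegrable h MeasureTheory.volume a b :=
    fun a b => hh.continuous.intervalIntegrable a b
  unfold gridAvg cellAvg Hfun
  have e1 : xi + (j:ℝ) * s - s / 2 = xi + ((j:ℝ) - 1/2) * s := by ring
  have e2 : xi + (j:ℝ) * s + s / 2 = xi + ((j:ℝ) + 1/2) * s := by ring
  rw [e1, e2]
  have key := intervalIntegral.integral_add_adjacent_intervals
    (hint xi (xi + ((j:ℝ) - 1/2) * s)) (hint (xi + ((j:ℝ) - 1/2) * s) (xi + ((j:ℝ) + 1/2) * s))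
  have e3 : (∫ ξ in (xi + ((j:ℝ) - 1/2) * s)..(xi + ((j:ℝ) + 1/2) * s), h ξ)
      = (∫ t in xi..(xi + ((j:ℝ) + 1/2) * s), h t) - ∫ t in xi..(xi + ((j:ℝ) - 1/2) * s), h t := by
    linarith [key]
  rw [e3]; field_simp

lemma phi_bigO (τ : ℝ) :
    (fun s : ℝ => (1/2) * Hfun h xi (xi + τ*s) + (-(3/2)) * Hfun h xi (xi + (τ+1)*s)
      + (3/2) * Hfun h xi (xi + (τ+2)*s) + (-(1/2)) * Hfun h xi (xi + (τ+3)*s))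
    =O[𝓝[≥] (0:ℝ)] fun s => s ^ 3 := by
  have hH := Hfun_contDiff hh xi
  refine myVanish 2 _ (by fun_prop) ?_
  intro j hj
  rw [iterCombo4 hH]
  interval_cases j <;> (rw [mul_eq_zero]; left; ring)

lemma psi_bigO :
    (fun s : ℝ => (-(1/12)) * Hfun h xi (xi + (-(5/2))*s) + (3/4) * Hfun h xi (xi + (-(3/2))*s)
      + (-(2/3)) * Hfun h xi (xi + (-(1/2))*s) + (-(2/3)) * Hfun h xi (xi + (1/2)*s)
      + (3/4) * Hfun h xi (xi + (3/2)*s) + (-(1/12)) * Hfun h xi (xi + (5/2)*s)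
      - s * (h (xi + (1/2)*s) - h (xi + (-(1/2))*s)))
    =O[𝓝[≥] (0:ℝ)] fun s => s ^ 6 := by
  have hH := Hfun_contDiff hh xi
  have hg : ContDiff ℝ (⊤:ℕ∞) (fun s : ℝ => h (xi + (1/2)*s) - h (xi + (-(1/2))*s)) := by
    fun_prop
  have hgm : ∀ m : ℕ, iteratedDeriv m (fun s : ℝ => h (xi + (1/2)*s) - h (xi + (-(1/2))*s)) 0
      = ((1/2)^m - (-(1/2))^m) * iteratedDeriv m h xi := by
    intro m
    rw [myIterSub (contAff' hh xi (1/2)) (contAff' hh xi (-(1/2))),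
      myIterAffine hh, myIterAffine hh]
    norm_num
    ring
  refine myVanish 5 _ (by fun_prop) ?_
  intro j hj
  rw [show (fun s : ℝ => (-(1/12)) * Hfun h xi (xi + (-(5/2))*s) + (3/4) * Hfun h xi (xi + (-(3/2))*s)
      + (-(2/3)) * Hfun h xi (xi + (-(1/2))*s) + (-(2/3)) * Hfun h xi (xi + (1/2)*s)
      + (3/4) * Hfun h xi (xi + (3/2)*s) + (-(1/12)) * Hfun h xi (xi + (5/2)*s)
      - s * (h (xi + (1/2)*s) - h (xi + (-(1/2))*s)))
    = (fun s : ℝ => (fun s : ℝ => (-(1/12)) * Hfun h xi (xi + (-(5/2))*s) + (3/4) * Hfun h xi (xi + (-(3/2))*s)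
      + (-(2/3)) * Hfun h xi (xi + (-(1/2))*s) + (-(2/3)) * Hfun h xi (xi + (1/2)*s)
      + (3/4) * Hfun h xi (xi + (3/2)*s) + (-(1/12)) * Hfun h xi (xi + (5/2)*s)) s
      - (fun s : ℝ => s * ((fun s : ℝ => h (xi + (1/2)*s) - h (xi + (-(1/2))*s)) s)) s) from rfl]
  rw [myIterSub (by fun_prop) (by fun_prop), iterCombo6 hH, myIterMulId hg, hgm, hgm]
  interval_cases j
  · norm_num
  · norm_num
  · rw [show iteratedDeriv 2 (Hfun h xi) xi = iteratedDeriv 1 h xi from Hfun_iter hh xi 1]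
    norm_num
  · rw [show iteratedDeriv 3 (Hfun h xi) xi = iteratedDeriv 2 h xi from Hfun_iter hh xi 2]
    norm_num
  · rw [show iteratedDeriv 4 (Hfun h xi) xi = iteratedDeriv 3 h xi from Hfun_iter hh xi 3]
    norm_num
    ring
  · rw [show iteratedDeriv 5 (Hfun h xi) xi = iteratedDeriv 4 h xi from Hfun_iter hh xi 4]
    norm_num

end Helpers

set_option maxHeartbeats 4000000 in
theorem stmt_15 (h : ℝ → ℝ) (hh : ContDiff ℝ (⊤ : ℕ∞) h) (xi : ℝ)
    (ωp ωm : Fin 3 → ℝ → ℝ)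
    (hsum_p : ∀ᶠ Δx in nhdsWithin (0:ℝ) (Set.Ioi 0), ωp 0 Δx + ωp 1 Δx + ωp 2 Δx = 1)
    (hsum_m : ∀ᶠ Δx in nhdsWithin (0:ℝ) (Set.Ioi 0), ωm 0 Δx + ωm 1 Δx + ωm 2 Δx = 1)
    (hwp : ∀ k, (fun Δx => ωp k Δx - dWeight k)
        =O[nhdsWithin (0:ℝ) (Set.Ioi 0)] (fun Δx : ℝ => Δx ^ 3))
    (hwm : ∀ k, (fun Δx => ωm k Δx - dWeight k)
        =O[nhdsWithin (0:ℝ) (Set.Ioi 0)] (fun Δx : ℝ => Δx ^ 3)) :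
    (fun Δx : ℝ =>
        ((∑ k : Fin 3, ωp k Δx * candFlux (gridAvg h xi Δx) 0 k) -
            (∑ k : Fin 3, ωm k Δx * candFlux (gridAvg h xi Δx) (-1) k)) / Δx -
          (h (xi + Δx / 2) - h (xi - Δx / 2)) / Δx)
      =O[nhdsWithin (0:ℝ) (Set.Ioi 0)] (fun Δx : ℝ => Δx ^ 4) := by
  have hh' : ContDiff ℝ (⊤:ℕ∞) h := hh.of_le (by simp)
  set l := nhdsWithin (0:ℝ) (Set.Ioi 0) with hl
  have hmono : l ≤ 𝓝[≥] (0:ℝ) := nhdsWithin_mono 0 Set.Ioi_subset_Ici_self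
  set ψ : ℝ → ℝ := fun s : ℝ =>
      (-(1/12)) * Hfun h xi (xi + (-(5/2))*s) + (3/4) * Hfun h xi (xi + (-(3/2))*s)
      + (-(2/3)) * Hfun h xi (xi + (-(1/2))*s) + (-(2/3)) * Hfun h xi (xi + (1/2)*s)
      + (3/4) * Hfun h xi (xi + (3/2)*s) + (-(1/12)) * Hfun h xi (xi + (5/2)*s)
      - s * (h (xi + (1/2)*s) - h (xi + (-(1/2))*s)) with hψdef
  set φA : ℝ → ℝ := fun s : ℝ =>
      (1/2) * Hfun h xi (xi + (-(3/2))*s) + (-(3/2)) * Hfun h xi (xi + (-(3/2)+1)*s)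
      + (3/2) * Hfun h xi (xi + (-(3/2)+2)*s) + (-(1/2)) * Hfun h xi (xi + (-(3/2)+3)*s) with hφAdef
  set φB : ℝ → ℝ := fun s : ℝ =>
      (1/2) * Hfun h xi (xi + (-(1/2))*s) + (-(3/2)) * Hfun h xi (xi + (-(1/2)+1)*s)
      + (3/2) * Hfun h xi (xi + (-(1/2)+2)*s) + (-(1/2)) * Hfun h xi (xi + (-(1/2)+3)*s) with hφBdef
  set φC : ℝ → ℝ := fun s : ℝ =>
      (1/2) * Hfun h xi (xi + (-(5/2))*s) + (-(3/2)) * Hfun h xi (xi + (-(5/2)+1)*s)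
      + (3/2) * Hfun h xi (xi + (-(5/2)+2)*s) + (-(1/2)) * Hfun h xi (xi + (-(5/2)+3)*s) with hφCdef
  have hψO : ψ =O[l] fun s => s ^ 6 := (psi_bigO hh' xi).mono hmono
  have hφAO : φA =O[l] fun s => s ^ 3 := (phi_bigO hh' xi (-(3/2))).mono hmono
  have hφBO : φB =O[l] fun s => s ^ 3 := (phi_bigO hh' xi (-(1/2))).mono hmono
  have hφCO : φC =O[l] fun s => s ^ 3 := (phi_bigO hh' xi (-(5/2))).mono hmono
  have hd0 : dWeight 0 = 1/6 := by norm_num [dWeight]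
  have hd2 : dWeight 2 = 1/6 := by simp [dWeight]
  have hwp0 := hwp 0; rw [hd0] at hwp0
  have hwp2 := hwp 2; rw [hd2] at hwp2
  have hwm0 := hwm 0; rw [hd0] at hwm0
  have hwm2 := hwm 2; rw [hd2] at hwm2
  have e36 : (fun s : ℝ => s ^ 3 * s ^ 3) = fun s : ℝ => s ^ 6 := funext fun s => by ring
  have hP0 : (fun s => (ωp 0 s - 1/6) * φA s) =O[l] fun s => s ^ 6 := by
    have := hwp0.mul hφAO; rwa [e36] at this
  have hP2 : (fun s => (ωp 2 s - 1/6) * φB s) =O[l] fun s => s ^ 6 := by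
    have := hwp2.mul hφBO; rwa [e36] at this
  have hM0 : (fun s => (ωm 0 s - 1/6) * φC s) =O[l] fun s => s ^ 6 := by
    have := hwm0.mul hφCO; rwa [e36] at this
  have hM2 : (fun s => (ωm 2 s - 1/6) * φA s) =O[l] fun s => s ^ 6 := by
    have := hwm2.mul hφAO; rwa [e36] at this
  set N : ℝ → ℝ := fun s => ψ s + (ωp 0 s - 1/6) * φA s + (ωp 2 s - 1/6) * φB s
      - (ωm 0 s - 1/6) * φC s - (ωm 2 s - 1/6) * φA s with hNdef
  have hN : N =O[l] fun s => s ^ 6 := ((((hψO.add hP0).add hP2).sub hM0).sub hM2)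
  have hkey : ∀ᶠ s in l,
      ((∑ k : Fin 3, ωp k s * candFlux (gridAvg h xi s) 0 k) -
            (∑ k : Fin 3, ωm k s * candFlux (gridAvg h xi s) (-1) k)) / s -
          (h (xi + s / 2) - h (xi - s / 2)) / s = N s / s ^ 2 := by
    filter_upwards [self_mem_nhdsWithin, hsum_p, hsum_m] with s hs hp hm
    have hs0 : s ≠ 0 := ne_of_gt hs
    have h1 : ωp 1 s = 1 - ωp 0 s - ωp 2 s := by linarith
    have h2 : ωm 1 s = 1 - ωm 0 s - ωm 2 s := by linarith
    simp only [Fin.sum_univ_three, candFlux, Matrix.cons_val_zero, Matrix.cons_val_one,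
      Matrix.head_cons, Matrix.cons_val_two, Matrix.tail_cons]
    simp only [gridAvg_eq hh' xi hs0]
    rw [h1, h2]
    simp only [hNdef, hψdef, hφAdef, hφBdef, hφCdef]
    push_cast
    have ea : xi + s/2 = xi + (1/2)*s := by ring
    have eb : xi - s/2 = xi + (-(1/2))*s := by ring
    rw [ea, eb]
    field_simp
    ring_nf
  have h1 : (fun s => N s * (s^2)⁻¹) =O[l] fun s => s ^ 6 * (s^2)⁻¹ :=
    hN.mul (isBigO_refl _ _)
  refine h1.congr' ?_ ?_
  · filter_upwards [hkey] with s hs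
    rw [hs, div_eq_mul_inv]
  · filter_upwards [self_mem_nhdsWithin] with s hs
    have hs0 : s ≠ 0 := ne_of_gt hs
    field_simp
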